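/- Let f : C → C be a geodesic-preserving bijection of the flat cylinder C such that f(π(0,0)) = π(0,0), f(π(0,1)) = π(0,1), and f maps the vertical geodesic v = π({0} × ℝ) onto itself. If p, q ∈ C have the same first coordinate and their second coordinates differ by exactly 1 in absolute value, then f(p) and f(q) have the same first coordinate and their second coordinates differ by exactly 1 in absolute value. -/

import Mathlib

/-- The flat cylinder `C = (ℝ/ℤ) × ℝ`. -/
abbrev Cyl : Type := AddCircle (1 : ℝ) × ℝ

/-- The quotient map `π : ℝ × ℝ → C`, `π(x, y) = (↑x, y)`. -/
noncomputable def cylπ (p : ℝ × ℝ) : Cyl := ((p.1 : AddCircle (1 : ℝ)), p.2)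

/-- An affine line in `ℝ²`. -/
def IsLine (L : Set (ℝ × ℝ)) : Prop :=
  ∃ p v : ℝ × ℝ, v ≠ 0 ∧ L = {x | ∃ t : ℝ, x = p + t • v}

/-- A geodesic of the flat cylinder is the image under `π` of an affine line. -/
def IsCylGeodesic (G : Set Cyl) : Prop :=
  ∃ L : Set (ℝ × ℝ), IsLine L ∧ G = cylπ '' L

/-!
Geodesics of the cylinder are the verticals `{θ} × ℝ` and the graphs of `y = m x + b`.
Comparing how geodesics meet the fixed vertical `v` shows that `f` maps verticals to verticals
and horizontals to horizontals, so `f (θ, y) = (g θ, F y)`; it also maps graphs of slope `m`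
to graphs of a slope `μ m` depending only on `m`, and `μ` is injective. The graph of slope `m`
through `(0, y)` passes through `(1/m, y + 1)`, whose image has first coordinate `g (1/m)`
independent of `y`; hence `(F (y + 1) - F y) - (F (y' + 1) - F y')` is an integer multiple of
`μ m` for every `m ≠ 0`. A nonzero real is an integer multiple of only countably many reals, so
`F (y + 1) - F y` is constant, equal to `F 1 - F 0 = 1`.
-/

open AddSubgroup

lemma Real.zmultiples_ne_top (a : ℝ) : zmultiples a ≠ ⊤ := by
  intro h
  apply Cardinal.not_countable_real
  rw [← coe_top, ← h, coe_zmultiples]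
  exact Set.countable_range _

lemma Real.countable_setOf_mem_zmultiples {d : ℝ} (hd : d ≠ 0) :
    {a : ℝ | d ∈ zmultiples a}.Countable := by
  refine (Set.countable_range fun k : ℤ => d / k).mono ?_
  rintro a ⟨k, rfl⟩
  have hk : (k : ℝ) ≠ 0 := by rintro h; simp_all
  exact ⟨k, by simp only [zsmul_eq_mul]; field_simp⟩

namespace Cyl

def vertical (α : AddCircle (1 : ℝ)) : Set Cyl := {p | p.1 = α}

def graph (m b : ℝ) : Set Cyl := {p | ∃ x : ℝ, p = ((x : AddCircle (1 : ℝ)), m * x + b)}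

lemma mk_mem_graph (m b x : ℝ) : ((x : AddCircle (1 : ℝ)), m * x + b) ∈ graph m b := ⟨x, rfl⟩

lemma mem_graph_coe_iff {m b x s : ℝ} :
    ((x : AddCircle (1 : ℝ)), s) ∈ graph m b ↔ s - m * x - b ∈ zmultiples m := by
  simp only [graph, Set.mem_ofPred_eq, Prod.ext_iff, QuotientAddGroup.eq_iff_sub_mem,
    mem_zmultiples_iff, zsmul_eq_mul, mul_one]
  constructor
  · rintro ⟨t, ⟨k, hk⟩, rfl⟩
    exact ⟨-k, by push_cast; linear_combination -m * hk⟩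
  · rintro ⟨k, hk⟩
    exact ⟨x + k, ⟨-k, by push_cast; ring⟩, by linear_combination -hk⟩

lemma graph_zero (b : ℝ) : graph 0 b = {p | p.2 = b} := by
  ext ⟨α, s⟩
  obtain ⟨x, rfl⟩ := QuotientAddGroup.mk_surjective α
  simp [mem_graph_coe_iff, sub_eq_zero]

lemma graph_eq_of_mem {m b b' : ℝ} {p : Cyl} (h : p ∈ graph m b) (h' : p ∈ graph m b') :
    graph m b = graph m b' := by
  obtain ⟨x, rfl⟩ := h
  have hb : b - b' ∈ zmultiples m := by simpa using mem_graph_coe_iff.1 h'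
  ext ⟨α, s⟩
  obtain ⟨y, rfl⟩ := QuotientAddGroup.mk_surjective α
  simp only [mem_graph_coe_iff]
  constructor <;> intro hs
  · simpa using add_mem hs hb
  · simpa using sub_mem hs hb

lemma slope_eq_of_graph_subset {m b m' b' : ℝ} (h : graph m b ⊆ graph m' b') : m = m' := by
  by_contra hne
  have hm : m - m' ≠ 0 := sub_ne_zero.2 hne
  have hmem (x : ℝ) : (m - m') * x + (b - b') ∈ zmultiples m' := by
    convert mem_graph_coe_iff.1 (h (mk_mem_graph m b x)) using 1
    ring
  refine Real.zmultiples_ne_top m' (eq_top_iff.2 fun t _ => ?_)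
  simpa [mul_div_cancel₀ _ hm] using sub_mem (hmem (t / (m - m'))) (hmem 0)

lemma graph_inter_graph_nonempty {m b m' b' : ℝ} (h : m ≠ m') :
    (graph m b ∩ graph m' b').Nonempty := by
  have hm : m - m' ≠ 0 := sub_ne_zero.2 h
  set x := (b' - b) / (m - m')
  refine ⟨_, mk_mem_graph m b x, ⟨x, Prod.ext rfl ?_⟩⟩
  simp only [x]
  field_simp
  ring

lemma graph_inter_vertical_nonempty (m b : ℝ) (α : AddCircle (1 : ℝ)) :
    (graph m b ∩ vertical α).Nonempty := by
  obtain ⟨x, rfl⟩ := QuotientAddGroup.mk_surjective α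
  exact ⟨_, mk_mem_graph m b x, rfl⟩

lemma graph_inter_vertical_subsingleton_iff {m b : ℝ} {α : AddCircle (1 : ℝ)} :
    (graph m b ∩ vertical α).Subsingleton ↔ m = 0 := by
  constructor
  · intro h
    obtain ⟨x, rfl⟩ := QuotientAddGroup.mk_surjective α
    have hnext : ((x : AddCircle (1 : ℝ)), m * x + b + m) ∈ graph m b := by
      rw [mem_graph_coe_iff]
      convert mem_zmultiples m using 1
      ring
    have := h ⟨mk_mem_graph m b x, rfl⟩ ⟨hnext, rfl⟩
    simpa using congrArg Prod.snd this
  · rintro rfl p ⟨hp, hpα⟩ q ⟨hq, hqα⟩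
    rw [graph_zero] at hp hq
    exact Prod.ext (hpα.trans hqα.symm) (hp.trans hq.symm)

lemma graph_ne_vertical (m b : ℝ) (α : AddCircle (1 : ℝ)) : graph m b ≠ vertical α := by
  intro h
  obtain ⟨x, rfl⟩ := QuotientAddGroup.mk_surjective α
  refine Real.zmultiples_ne_top m (eq_top_iff.2 fun t _ => ?_)
  have : ((x : AddCircle (1 : ℝ)), t + m * x + b) ∈ graph m b := h ▸ rfl
  convert mem_graph_coe_iff.1 this using 1
  ring

lemma vertical_inter_vertical {α β : AddCircle (1 : ℝ)} (h : α ≠ β) :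
    vertical α ∩ vertical β = ∅ :=
  Set.eq_empty_of_forall_notMem fun _ ⟨hα, hβ⟩ => h (hα.symm.trans hβ)

lemma isCylGeodesic_vertical (α : AddCircle (1 : ℝ)) : IsCylGeodesic (vertical α) := by
  obtain ⟨x, rfl⟩ := QuotientAddGroup.mk_surjective α
  refine ⟨_, ⟨(x, 0), (0, 1), by simp, rfl⟩, ?_⟩
  ext ⟨β, s⟩
  simp only [vertical, Set.mem_ofPred_eq, Set.mem_image, cylπ]
  constructor
  · rintro rfl
    exact ⟨(x, s), ⟨s, by simp⟩, rfl⟩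
  · rintro ⟨_, ⟨t, rfl⟩, h⟩
    exact (congrArg Prod.fst h).symm.trans (by simp)

lemma isCylGeodesic_graph (m b : ℝ) : IsCylGeodesic (graph m b) := by
  refine ⟨_, ⟨(0, b), (1, m), by simp, rfl⟩, ?_⟩
  ext p
  simp only [graph, Set.mem_ofPred_eq, Set.mem_image, cylπ]
  constructor
  · rintro ⟨x, rfl⟩
    exact ⟨_, ⟨x, rfl⟩, by simp [add_comm, mul_comm]⟩
  · rintro ⟨_, ⟨t, rfl⟩, rfl⟩
    exact ⟨t, by simp [add_comm, mul_comm]⟩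

lemma eq_vertical_or_eq_graph_of_isCylGeodesic {G : Set Cyl} (hG : IsCylGeodesic G) :
    (∃ α, G = vertical α) ∨ ∃ m b, G = graph m b := by
  obtain ⟨_, ⟨p, v, hv, rfl⟩, rfl⟩ := hG
  rcases eq_or_ne v.1 0 with hv₁ | hv₁
  · have hv₂ : v.2 ≠ 0 := fun h => hv (Prod.ext hv₁ h)
    refine .inl ⟨p.1, Set.ext fun ⟨α, s⟩ => ⟨?_, ?_⟩⟩
    · rintro ⟨_, ⟨t, rfl⟩, h⟩
      exact (congrArg Prod.fst h).symm.trans (by simp [cylπ, hv₁])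
    · rintro (rfl : α = p.1)
      refine ⟨_, ⟨(s - p.2) / v.2, rfl⟩, Prod.ext (by simp [cylπ, hv₁]) ?_⟩
      simp [cylπ]
      field_simp
      ring
  · refine .inr ⟨v.2 / v.1, p.2 - v.2 / v.1 * p.1, Set.ext fun q => ⟨?_, ?_⟩⟩
    · rintro ⟨_, ⟨t, rfl⟩, rfl⟩
      refine ⟨p.1 + t * v.1, Prod.ext (by simp [cylπ]) ?_⟩
      simp [cylπ]
      field_simp
      ring
    · rintro ⟨x, rfl⟩
      refine ⟨_, ⟨(x - p.1) / v.1, rfl⟩, Prod.ext ?_ ?_⟩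
      · simp [cylπ, div_mul_cancel₀ _ hv₁]
      · simp [cylπ]
        field_simp
        ring

def PreservesGeodesics (f : Cyl → Cyl) : Prop :=
  ∀ G : Set Cyl, IsCylGeodesic G → IsCylGeodesic (f '' G)

section Image

variable {f : Cyl → Cyl}

lemma image_graph_ne_vertical (hf : f.Injective) (hV : f '' vertical 0 = vertical 0)
    (m b : ℝ) (α : AddCircle (1 : ℝ)) : f '' graph m b ≠ vertical α := by
  intro h
  obtain ⟨p, hpG, hpV⟩ := graph_inter_vertical_nonempty m b 0
  have hα : α = 0 := by
    have h₁ : f p ∈ vertical α := h ▸ Set.mem_image_of_mem f hpG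
    have h₂ : f p ∈ vertical 0 := hV ▸ Set.mem_image_of_mem f hpV
    exact h₁.symm.trans h₂
  subst hα
  exact graph_ne_vertical m b 0 (hf.image_injective (h.trans hV.symm))

lemma exists_image_graph (hf : f.Injective) (hgeo : PreservesGeodesics f)
    (hV : f '' vertical 0 = vertical 0) (m b : ℝ) : ∃ μ β, f '' graph m b = graph μ β :=
  (eq_vertical_or_eq_graph_of_isCylGeodesic (hgeo _ (isCylGeodesic_graph m b))).resolve_left
    fun ⟨α, h⟩ => image_graph_ne_vertical hf hV m b α h

lemma exists_image_horizontal (hf : f.Injective) (hgeo : PreservesGeodesics f)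
    (hV : f '' vertical 0 = vertical 0) (b : ℝ) : ∃ β, f '' graph 0 b = graph 0 β := by
  obtain ⟨μ, β, h⟩ := exists_image_graph hf hgeo hV 0 b
  have : (graph μ β ∩ vertical 0).Subsingleton := by
    rw [← h, ← hV, ← Set.image_inter hf, hf.subsingleton_image_iff]
    exact graph_inter_vertical_subsingleton_iff.2 rfl
  rw [graph_inter_vertical_subsingleton_iff.1 this] at h
  exact ⟨β, h⟩

lemma exists_image_vertical (hf : f.Injective) (hgeo : PreservesGeodesics f)
    (hV : f '' vertical 0 = vertical 0) (α : AddCircle (1 : ℝ)) :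
    ∃ α', f '' vertical α = vertical α' := by
  rcases eq_or_ne α 0 with rfl | hα
  · exact ⟨0, hV⟩
  refine (eq_vertical_or_eq_graph_of_isCylGeodesic
    (hgeo _ (isCylGeodesic_vertical α))).resolve_right ?_
  rintro ⟨μ, β, h⟩
  have := graph_inter_vertical_nonempty μ β 0
  rw [← h, ← hV, ← Set.image_inter hf, vertical_inter_vertical hα, Set.image_empty] at this
  exact Set.not_nonempty_empty this

lemma fst_apply_eq_of_fst_eq (hf : f.Injective) (hgeo : PreservesGeodesics f)
    (hV : f '' vertical 0 = vertical 0) {p q : Cyl} (h : p.1 = q.1) : (f p).1 = (f q).1 := by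
  obtain ⟨α, hα⟩ := exists_image_vertical hf hgeo hV p.1
  have hp : f p ∈ vertical α := hα ▸ Set.mem_image_of_mem f rfl
  have hq : f q ∈ vertical α := hα ▸ Set.mem_image_of_mem f h.symm
  exact hp.trans hq.symm

lemma snd_apply_eq_of_snd_eq (hf : f.Injective) (hgeo : PreservesGeodesics f)
    (hV : f '' vertical 0 = vertical 0) {p q : Cyl} (h : p.2 = q.2) : (f p).2 = (f q).2 := by
  obtain ⟨β, hβ⟩ := exists_image_horizontal hf hgeo hV p.2
  rw [graph_zero, graph_zero] at hβ
  have hp : f p ∈ {r : Cyl | r.2 = β} := hβ ▸ Set.mem_image_of_mem f rfl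
  have hq : f q ∈ {r : Cyl | r.2 = β} := hβ ▸ Set.mem_image_of_mem f h.symm
  exact hp.trans hq.symm

lemma image_graph_slope_eq_iff (hf : f.Injective) {m₁ b₁ μ₁ β₁ m₂ b₂ μ₂ β₂ : ℝ}
    (h₁ : f '' graph m₁ b₁ = graph μ₁ β₁) (h₂ : f '' graph m₂ b₂ = graph μ₂ β₂) :
    μ₁ = μ₂ ↔ m₁ = m₂ := by
  constructor
  · intro hμ
    by_contra hm
    obtain ⟨p, hp₁, hp₂⟩ := graph_inter_graph_nonempty (b := b₁) (b' := b₂) hm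
    have hfp₁ : f p ∈ graph μ₁ β₁ := h₁ ▸ Set.mem_image_of_mem f hp₁
    have hfp₂ : f p ∈ graph μ₁ β₂ := hμ ▸ h₂ ▸ Set.mem_image_of_mem f hp₂
    have : f '' graph m₁ b₁ = f '' graph m₂ b₂ := by
      rw [h₁, h₂, ← hμ]
      exact graph_eq_of_mem hfp₁ hfp₂
    exact hm (slope_eq_of_graph_subset (hf.image_injective this).le)
  · rintro rfl
    by_contra hμ
    obtain ⟨_, ⟨p, hp₁, rfl⟩, hfp₂⟩ :=
      h₁ ▸ h₂ ▸ graph_inter_graph_nonempty (b := β₁) (b' := β₂) hμ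
    obtain ⟨q, hq₂, hqp⟩ := hfp₂
    rw [hf hqp] at hq₂
    have : graph μ₁ β₁ = graph μ₂ β₂ := by rw [← h₁, ← h₂, graph_eq_of_mem hp₁ hq₂]
    exact hμ (slope_eq_of_graph_subset this.le)

lemma increment_sub_increment_mem_zmultiples (hf : f.Injective) (hgeo : PreservesGeodesics f)
    (hV : f '' vertical 0 = vertical 0) {m μ β : ℝ} (hm : m ≠ 0)
    (h : f '' graph m 0 = graph μ β) (y y' : ℝ) :
    ((f (0, y + 1)).2 - (f (0, y)).2) - ((f (0, y' + 1)).2 - (f (0, y')).2) ∈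
      zmultiples μ := by
  obtain ⟨x₀, hx₀⟩ := QuotientAddGroup.mk_surjective (f ((m⁻¹ : ℝ), 0)).1
  have hmod (y : ℝ) : (f (0, y + 1)).2 - (f (0, y)).2 - μ * x₀ ∈ zmultiples μ := by
    obtain ⟨μ', β', h'⟩ := exists_image_graph hf hgeo hV m y
    obtain rfl : μ' = μ := (image_graph_slope_eq_iff hf h' h).2 rfl
    have hfP : f (0, y) ∈ vertical 0 := hV ▸ Set.mem_image_of_mem f rfl
    have hP : f (0, y) = (((0 : ℝ) : AddCircle (1 : ℝ)), (f (0, y)).2) :=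
      Prod.ext hfP rfl
    have hQ : f ((m⁻¹ : ℝ), y + 1) = ((x₀ : AddCircle (1 : ℝ)), (f (0, y + 1)).2) :=
      Prod.ext (hx₀ ▸ fst_apply_eq_of_fst_eq hf hgeo hV rfl)
        (snd_apply_eq_of_snd_eq hf hgeo hV rfl)
    have hP' := mk_mem_graph m y 0
    have hQ' := mk_mem_graph m y m⁻¹
    rw [mul_zero, zero_add, QuotientAddGroup.mk_zero] at hP'
    rw [mul_inv_cancel₀ hm, add_comm] at hQ'
    have hfP := mem_graph_coe_iff.1 (hP ▸ h' ▸ Set.mem_image_of_mem f hP')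
    have hfQ := mem_graph_coe_iff.1 (hQ ▸ h' ▸ Set.mem_image_of_mem f hQ')
    convert sub_mem hfQ hfP using 1
    ring
  convert sub_mem (hmod y) (hmod y') using 1
  ring

lemma increment_eq_increment (hf : f.Injective) (hgeo : PreservesGeodesics f)
    (hV : f '' vertical 0 = vertical 0) (y y' : ℝ) :
    (f (0, y + 1)).2 - (f (0, y)).2 = (f (0, y' + 1)).2 - (f (0, y')).2 := by
  by_contra hne
  choose μ β hμ using fun m => exists_image_graph hf hgeo hV m 0
  have hinj : Set.InjOn μ {0}ᶜ := fun m₁ _ m₂ _ h =>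
    (image_graph_slope_eq_iff hf (hμ m₁) (hμ m₂)).1 h
  have hmaps : Set.MapsTo μ {0}ᶜ {a | _ ∈ zmultiples a} := fun m hm =>
    increment_sub_increment_mem_zmultiples hf hgeo hV hm (hμ m) y y'
  have hcount := (hmaps.countable_of_injOn hinj
    (Real.countable_setOf_mem_zmultiples (sub_ne_zero.2 hne))).union (Set.countable_singleton 0)
  rw [Set.compl_union_self] at hcount
  exact Cardinal.not_countable_real hcount

end Image

lemma cylπ_image_zero_prod_univ : cylπ '' (({0} : Set ℝ) ×ˢ Set.univ) = vertical 0 := by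
  ext ⟨α, s⟩
  simp [cylπ, vertical, eq_comm]

end Cyl

open Cyl

/-- A geodesic-preserving bijection of the cylinder fixing `π(0,0)`, `π(0,1)` and the vertical
geodesic `v = π({0} × ℝ)` setwise sends pairs of points on a common vertical at distance `1`
to pairs of points on a common vertical at distance `1`. -/
theorem cylinder_unit_vertical_distance_preserved (f : Cyl → Cyl)
    (hbij : Function.Bijective f)
    (hgeo : ∀ G : Set Cyl, IsCylGeodesic G → IsCylGeodesic (f '' G))
    (h0 : f (cylπ (0, 0)) = cylπ (0, 0))
    (h1 : f (cylπ (0, 1)) = cylπ (0, 1))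
    (hv : f '' (cylπ '' (({0} : Set ℝ) ×ˢ (Set.univ : Set ℝ))) =
      cylπ '' (({0} : Set ℝ) ×ˢ (Set.univ : Set ℝ)))
    (p q : Cyl) (hpq1 : p.1 = q.1) (hpq2 : |p.2 - q.2| = 1) :
    (f p).1 = (f q).1 ∧ |(f p).2 - (f q).2| = 1 := by
  have hf := hbij.injective
  rw [cylπ_image_zero_prod_univ] at hv
  have hheight (r : Cyl) : (f r).2 = (f (0, r.2)).2 := snd_apply_eq_of_snd_eq hf hgeo hv rfl
  have hstep (y : ℝ) : (f (0, y + 1)).2 - (f (0, y)).2 = 1 := by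
    have h01 := increment_eq_increment hf hgeo hv y 0
    simp only [cylπ, QuotientAddGroup.mk_zero] at h0 h1
    rwa [zero_add, h0, h1, sub_zero] at h01
  refine ⟨fst_apply_eq_of_fst_eq hf hgeo hv hpq1, ?_⟩
  rw [hheight p, hheight q]
  rcases abs_eq zero_le_one |>.1 hpq2 with h | h
  · rw [show p.2 = q.2 + 1 by linarith, hstep, abs_one]
  · rw [show q.2 = p.2 + 1 by linarith, abs_sub_comm, hstep, abs_one]
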